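/- If two sequences X and Y of length N have Hamming distance d, then for each position i where they differ, at most k of the k-mer windows containing i are affected; consequently the L1 distance between their k-mer count vectors satisfies ∑_w |Φ_k(X)(w) - Φ_k(Y)(w)| ≤ 2·k·d_H(X,Y). -/

import Mathlib

def phi {A : Type*} [DecidableEq A] {N k : ℕ} (hk : k ≤ N) (X : Fin N → A)
    (w : Fin k → A) : ℕ :=
  (Finset.univ.filter (fun i : Fin (N - k + 1) =>
    (fun j : Fin k => X ⟨i + j, by have := i.2; have := j.2; omega⟩) = w)).card

def hamming {n : ℕ} {A : Type*} [DecidableEq A] (X Y : Fin n → A) : ℕ :=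
  (Finset.univ.filter (fun i => X i ≠ Y i)).card

/-! Only windows on which the `k`-mers of `X` and `Y` differ contribute to the `ℓ¹` distance of
the count vectors, each by at most `2` (one count goes down, another goes up). A differing window
contains a differing position, and a position lies in at most `k` windows, so there are at most
`k · d_H(X, Y)` such windows. -/

open Finset

theorem sum_abs_card_fiber_sub_card_fiber_le {ι β : Type*} [Fintype ι] [Fintype β]
    [DecidableEq β] (f g : ι → β) :
    ∑ w, |(#{i | f i = w} : ℝ) - #{i | g i = w}| ≤ 2 * #{i | f i ≠ g i} := by
  set D : Finset ι := {i | f i ≠ g i}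
  have card_fiber_eq (h : ι → β) (w : β) :
      #{i | h i = w} = #{i ∈ D | h i = w} + #{i | f i = g i ∧ h i = w} := by
    rw [← card_filter_add_card_filter_not (s := {i | h i = w}) (fun i => f i ≠ g i)]
    congr 2 <;> ext i <;> simp [D, and_comm]
  have agree (w : β) : #{i | f i = g i ∧ f i = w} = #{i | f i = g i ∧ g i = w} := by
    congr 1; ext i; simp only [mem_filter, mem_univ, true_and]; grind
  have fiberwise (h : ι → β) : ∑ w, (#{i ∈ D | h i = w} : ℝ) = #D := by
    exact_mod_cast (card_eq_sum_card_fiberwise fun i _ => mem_univ (h i)).symm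
  calc ∑ w, |(#{i | f i = w} : ℝ) - #{i | g i = w}|
      = ∑ w, |(#{i ∈ D | f i = w} : ℝ) - #{i ∈ D | g i = w}| := by
        refine sum_congr rfl fun w _ => ?_
        rw [card_fiber_eq f, card_fiber_eq g, agree]
        push_cast
        congr 1
        ring
    _ ≤ ∑ w, ((#{i ∈ D | f i = w} : ℝ) + #{i ∈ D | g i = w}) :=
        sum_le_sum fun w _ => (abs_sub _ _).trans_eq (by simp)
    _ = 2 * #D := by rw [sum_add_distrib, fiberwise, fiberwise]; ring

theorem card_ne_le_card_apply_ne {ι κ β : Type*} [Fintype ι] [Fintype κ] [DecidableEq β]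
    (f g : ι → κ → β) : #{i | f i ≠ g i} ≤ #{p : ι × κ | f p.1 p.2 ≠ g p.1 p.2} :=
  card_le_card_of_surjOn Prod.fst fun i hi => by
    obtain ⟨j, hj⟩ := Function.ne_iff.mp (mem_filter.mp hi).2
    exact ⟨(i, j), by simpa using hj, rfl⟩

def kmerWindow {A : Type*} {N k : ℕ} (hk : k ≤ N) (X : Fin N → A) (i : Fin (N - k + 1)) :
    Fin k → A :=
  fun j => X ⟨i + j, by have := i.2; have := j.2; omega⟩

theorem phi_eq_card_kmerWindow {A : Type*} [DecidableEq A] {N k : ℕ} (hk : k ≤ N)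
    (X : Fin N → A) (w : Fin k → A) : phi hk X w = #{i | kmerWindow hk X i = w} :=
  rfl

theorem card_kmerWindow_ne_le {A : Type*} [DecidableEq A] {N k : ℕ} (hk : k ≤ N)
    (X Y : Fin N → A) : #{i | kmerWindow hk X i ≠ kmerWindow hk Y i} ≤ k * hamming X Y := by
  calc #{i | kmerWindow hk X i ≠ kmerWindow hk Y i}
      ≤ #{p : Fin (N - k + 1) × Fin k | kmerWindow hk X p.1 p.2 ≠ kmerWindow hk Y p.1 p.2} :=
        card_ne_le_card_apply_ne _ _
    _ ≤ #(({p | X p ≠ Y p} : Finset (Fin N)) ×ˢ (univ : Finset (Fin k))) := by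
        refine card_le_card_of_injOn
          (fun p => (⟨p.1 + p.2, by have := p.1.2; have := p.2.2; omega⟩, p.2)) ?_ ?_
        · exact fun p hp => by simpa [kmerWindow] using (mem_filter.mp hp).2
        · intro p _ q _ hpq
          simp only [Prod.mk.injEq, Fin.mk.injEq] at hpq
          ext <;> omega
    _ = k * hamming X Y := by rw [card_product, card_univ, Fintype.card_fin, mul_comm]; rfl

theorem phi_l1_stability {A : Type*} [Fintype A] [DecidableEq A] {N k : ℕ}
    (hk : k ≤ N) (X Y : Fin N → A) :
    ∑ w : Fin k → A, |(phi hk X w : ℝ) - (phi hk Y w : ℝ)|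
      ≤ 2 * k * (hamming X Y : ℝ) := by
  simp only [phi_eq_card_kmerWindow]
  calc _ ≤ 2 * (#{i | kmerWindow hk X i ≠ kmerWindow hk Y i} : ℝ) :=
        sum_abs_card_fiber_sub_card_fiber_le _ _
    _ ≤ 2 * k * hamming X Y := by
        rw [mul_assoc]
        gcongr
        exact_mod_cast card_kmerWindow_ne_le hk X Y
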